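/- Factorization at an interior trunk (Proposition, part 1): let G be a Gauss diagram on n strings, I = {i_1 < i_2 < … < i_r} ⊆ {1,…,n}, and 1 < k < r. Then Z_{I∖{i_k}, i_k}(G) = Z_{I_k^-, i_k}(G) · Z_{I_k^+, i_k}(G), where I_k^- = I ∩ [1, i_k − 1] = {i_1,…,i_{k−1}} and I_k^+ = I ∩ [i_k + 1, n] = {i_{k+1},…,i_r}. (A planar tree with trunk on i_k consists of a left half-tree with leaves on I_k^- and a right half-tree with leaves on I_k^+.) -/

import Mathlib

/-!
Combinatorial Gauss diagrams on `n` strings and the tree invariants `Z I j`.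

A Gauss diagram is encoded by a finite set of arrows; each arrow records the
string (an element of `Fin n`) and the position (a rational number, increasing
in the direction of the orientation of the string) of its tail and of its head,
together with a sign `±1`.  Only the induced combinatorial data (linear order of
the endpoints along each string, the tail/head pairing and the signs) is ever
used by the definitions below.

The tree invariant `Z I j G = ∑_{A ∈ 𝒜_{I,j}} sign(A) ⟨A, G⟩` is computed as a
signed count over all subsets `S` of the arrows of `G` that form a planar tree
diagram with leaves on `I` and trunk on `j`: each pair `(A, φ)` of a planar tree
diagram `A ∈ 𝒜_{I,j}` together with an embedding `φ : A → G` corresponds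
bijectively to the subset `S = Im φ` of the arrows of `G`, which is itself a
planar tree diagram with leaves on `I` and trunk on `j`; the contribution of the
pair to the sum is `sign(A) · sign(φ) = (-1)^{#right-pointing arrows of S} · ∏_{a ∈ S} sign(a)`.
-/

open scoped Classical

/-- An arrow of a Gauss diagram on `n` strings: a tail endpoint, a head
endpoint (each given by the string it lies on and its position along that
string) and a sign. -/
structure GArrow (n : ℕ) where
  tailStr : Fin n
  tailPos : ℚ
  headStr : Fin n
  headPos : ℚ
  sign : ℤ
deriving DecidableEq

namespace GArrow

/-- The two endpoints of an arrow: `false` is the tail, `true` is the head. -/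
def ep {n : ℕ} (a : GArrow n) : Bool → Fin n × ℚ
  | false => (a.tailStr, a.tailPos)
  | true => (a.headStr, a.headPos)

end GArrow

/-- A Gauss diagram on `n` strings: a finite set of signed arrows with all
endpoints pairwise distinct, and all signs equal to `±1`. -/
structure GaussDiagram (n : ℕ) where
  arrows : Finset (GArrow n)
  sign_pm : ∀ a ∈ arrows, a.sign = 1 ∨ a.sign = -1
  endpoints_distinct : ∀ a ∈ arrows, ∀ b ∈ arrows, ∀ s t : Bool,
    a.ep s = b.ep t → a = b ∧ s = t

/-- `S` is a tree diagram with leaves on `I` and trunk on `j`: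
* the head and the tail of every arrow lie on different strings;
* for each `i ∈ I` there is exactly one arrow tail on string `i`, and there are
  no arrow tails on strings outside `I`;
* every arrow head lies on a string of `I ∪ {j}`;
* on each string `i ∈ I` all arrow heads precede the unique arrow tail. -/
def IsTreeDiagram {n : ℕ} (I : Finset (Fin n)) (j : Fin n)
    (S : Finset (GArrow n)) : Prop :=
  (∀ a ∈ S, a.tailStr ≠ a.headStr) ∧
  (∀ i ∈ I, ∃! a, a ∈ S ∧ a.tailStr = i) ∧
  (∀ a ∈ S, a.tailStr ∈ I) ∧
  (∀ a ∈ S, a.headStr ∈ I ∨ a.headStr = j) ∧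
  (∀ a ∈ S, ∀ b ∈ S, a.headStr = b.tailStr → a.headPos < b.tailPos)

/-- `ParentRel S s t` : string `s` is the parent of string `t` in the rooted
tree determined by the tree diagram `S`, i.e. the (unique) arrow with tail on
`t` has its head on `s`. -/
def ParentRel {n : ℕ} (S : Finset (GArrow n)) (s t : Fin n) : Prop :=
  ∃ a ∈ S, a.tailStr = t ∧ a.headStr = s

/-- `Descends S s k` : string `k` belongs to the subtree of string `s` (it is
`s` itself or an iterated child of `s`). -/
def Descends {n : ℕ} (S : Finset (GArrow n)) : Fin n → Fin n → Prop :=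
  Relation.ReflTransGen (ParentRel S)

/-- `S` is a *planar* tree diagram with leaves on `I` and trunk on `j`: the
rooted tree `T_S` determined by `S` can be drawn in the plane so that the
clockwise order of its leaves, starting from the root on string `j`, is the
order of the string numbers.  Combinatorially this says that:
* the parent relation makes the strings carrying the arrows into a tree rooted
  at `j` (every leaf string is an iterated child of `j`);
* the whole subtree hanging from an arrow lies on the same side of the string
  carrying the head of that arrow as its tail does;
* two subtrees hanging on the same side of a common string are ordered, along
  that string, compatibly with the order of the strings: for two arrow heads on
  the same string, with both tails on the left, the subtree attached closer to
  the beginning of the string is the one carrying the larger string numbers,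
  while for two tails on the right it is the one carrying the smaller string
  numbers. -/
def IsPlanarTreeDiagram {n : ℕ} (I : Finset (Fin n)) (j : Fin n)
    (S : Finset (GArrow n)) : Prop :=
  IsTreeDiagram I j S ∧
  (∀ i ∈ I, Relation.TransGen (ParentRel S) j i) ∧
  (∀ a ∈ S, ∀ k : Fin n, Descends S a.tailStr k →
    (a.tailStr < a.headStr ↔ k < a.headStr)) ∧
  (∀ a ∈ S, ∀ b ∈ S, a.headStr = b.headStr → a.headPos < b.headPos →
    ∀ k k' : Fin n, Descends S a.tailStr k → Descends S b.tailStr k' →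
      ((a.tailStr < a.headStr → b.tailStr < b.headStr → k' < k) ∧
       (a.headStr < a.tailStr → b.headStr < b.tailStr → k < k')))

/-- The sign `(-1)^q` of an (embedded) arrow diagram, where `q` is the number
of right-pointing arrows (tail on a string of smaller number than the head). -/
noncomputable def treeSign {n : ℕ} (S : Finset (GArrow n)) : ℤ :=
  (-1) ^ (S.filter fun a => a.tailStr < a.headStr).card

/-- The tree invariant `Z_{I,j}(G) = ∑_{A ∈ 𝒜_{I,j}} sign(A)·⟨A,G⟩`, computed
as the signed count of embedded planar tree diagrams with leaves on `I` and
trunk on `j` inside `G`.  In particular `Z ∅ j G = 1` (only `S = ∅`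
contributes). -/
noncomputable def Z {n : ℕ} (I : Finset (Fin n)) (j : Fin n)
    (G : GaussDiagram n) : ℤ :=
  ∑ S ∈ G.arrows.powerset,
    if IsPlanarTreeDiagram I j S then treeSign S * ∏ a ∈ S, a.sign else 0

/-!
Every arrow of a planar tree diagram with trunk on `i` whose head is not on `i` has its tail on
the same side of `i` as its head, since the whole subtree hanging from the first arrow of its
branch stays on one side of `i`. Hence a planar tree diagram with leaves on `I ∖ {i}` splits
uniquely into its arrows with tails left of `i` and those with tails right of `i`; these are
planar tree diagrams with leaves on `I⁻` and `I⁺`, every such pair glues back to a planar tree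
diagram, and the weight `treeSign S * ∏ a ∈ S, a.sign` is multiplicative under this splitting.
-/

theorem Finset.filter_lt_union_filter_gt {α β : Type*} [LinearOrder α] [DecidableEq β]
    {s : Finset β} {f : β → α} {x : α} (h : ∀ b ∈ s, f b ≠ x) :
    s.filter (fun b => f b < x) ∪ s.filter (fun b => x < f b) = s := by
  rw [← Finset.filter_or]
  exact Finset.filter_true_of_mem fun b hb => (h b hb).lt_or_gt

theorem Finset.filter_union_of_forall {β : Type*} [DecidableEq β] {s t : Finset β}
    {q : β → Prop} [DecidablePred q] (hs : ∀ b ∈ s, q b) (ht : ∀ b ∈ t, ¬ q b) :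
    (s ∪ t).filter q = s := by
  rw [Finset.filter_union, Finset.filter_true_of_mem hs, Finset.filter_false_of_mem ht,
    Finset.union_empty]

section

variable {n : ℕ}

theorem ParentRel.mono {S T : Finset (GArrow n)} (h : S ⊆ T) {s t : Fin n}
    (hst : ParentRel S s t) : ParentRel T s t :=
  let ⟨a, ha, hat, hah⟩ := hst
  ⟨a, h ha, hat, hah⟩

theorem Descends.mono {S T : Finset (GArrow n)} (h : S ⊆ T) {s t : Fin n}
    (hst : Descends S s t) : Descends T s t :=
  Relation.ReflTransGen.mono (fun _ _ => ParentRel.mono h) _ _ hst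

theorem descends_union_left {S₁ S₂ : Finset (GArrow n)} {p : Fin n → Prop}
    (h₁ : ∀ a ∈ S₁, p a.tailStr) (h₂ : ∀ a ∈ S₂, ¬ p a.headStr) {s k : Fin n}
    (hd : Descends (S₁ ∪ S₂) s k) (hs : p s) : Descends S₁ s k := by
  induction hd using Relation.ReflTransGen.head_induction_on with
  | refl => exact .refl
  | head hst _ ih =>
    obtain ⟨a, ha, rfl, rfl⟩ := hst
    have ha₁ : a ∈ S₁ := (Finset.mem_union.1 ha).resolve_right fun ha₂ => h₂ a ha₂ hs
    exact .head ⟨a, ha₁, rfl, rfl⟩ (ih (h₁ a ha₁))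

theorem transGen_parentRel_filter {S : Finset (GArrow n)} {i : Fin n} {p : Fin n → Prop}
    [DecidablePred p] (htail : ∀ a ∈ S, a.tailStr ≠ i)
    (hp : ∀ a ∈ S, a.headStr ≠ i → p a.tailStr → p a.headStr) {x : Fin n}
    (h : Relation.TransGen (ParentRel S) i x) (hx : p x) :
    Relation.TransGen (ParentRel (S.filter fun a => p a.tailStr)) i x := by
  induction h with
  | single hix =>
    obtain ⟨a, ha, rfl, hai⟩ := hix
    exact .single ⟨a, Finset.mem_filter.2 ⟨ha, hx⟩, rfl, hai⟩
  | tail him hmx ih =>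
    obtain ⟨a, ha, rfl, rfl⟩ := hmx
    have hm : a.headStr ≠ i := by
      obtain ⟨-, -, b, hb, hbt, -⟩ := Relation.TransGen.tail'_iff.1 him
      exact hbt ▸ htail b hb
    exact .tail (ih (hp a ha hm hx)) ⟨a, Finset.mem_filter.2 ⟨ha, hx⟩, rfl, rfl⟩

namespace IsTreeDiagram

variable {L : Finset (Fin n)} {i : Fin n} {S : Finset (GArrow n)}

theorem tailStr_mem (hS : IsTreeDiagram L i S) {a : GArrow n} (ha : a ∈ S) : a.tailStr ∈ L :=
  hS.2.2.1 a ha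

theorem eq_of_tailStr_eq (hS : IsTreeDiagram L i S) {a b : GArrow n} (ha : a ∈ S) (hb : b ∈ S)
    (hab : a.tailStr = b.tailStr) : a = b :=
  (hS.2.1 _ (hS.tailStr_mem ha)).unique ⟨ha, rfl⟩ ⟨hb, hab.symm⟩

theorem tailStr_ne (hS : IsTreeDiagram L i S) (hiL : i ∉ L) {a : GArrow n} (ha : a ∈ S) :
    a.tailStr ≠ i :=
  fun h => hiL (h ▸ hS.tailStr_mem ha)

theorem filter (hS : IsTreeDiagram L i S) {p : Fin n → Prop} [DecidablePred p]
    (hp : ∀ a ∈ S, a.headStr ≠ i → p a.tailStr → p a.headStr) :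
    IsTreeDiagram (L.filter p) i (S.filter fun a => p a.tailStr) := by
  obtain ⟨hne, huniq, htail, hhead, hpos⟩ := hS
  unfold IsTreeDiagram
  simp only [Finset.mem_filter]
  refine ⟨fun a ha => hne a ha.1, fun x hx => ?_, fun a ha => ⟨htail a ha.1, ha.2⟩,
    fun a ha => ?_, fun a ha b hb => hpos a ha.1 b hb.1⟩
  · obtain ⟨a, ⟨ha, rfl⟩, hu⟩ := huniq x hx.1
    exact ⟨a, ⟨⟨ha, hx.2⟩, rfl⟩, fun b hb => hu b ⟨hb.1.1, hb.2⟩⟩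
  · by_cases hai : a.headStr = i
    · exact .inr hai
    · exact .inl ⟨(hhead a ha.1).resolve_right hai, hp a ha.1 hai ha.2⟩

theorem existsUnique_tailStr_union {S₁ S₂ : Finset (GArrow n)} {x : Fin n}
    (h₁ : ∃! a, a ∈ S₁ ∧ a.tailStr = x) (h₂ : ∀ b ∈ S₂, b.tailStr ≠ x) :
    ∃! a, a ∈ S₁ ∪ S₂ ∧ a.tailStr = x := by
  obtain ⟨a, ha, hu⟩ := h₁
  refine ⟨a, ⟨Finset.mem_union_left _ ha.1, ha.2⟩, fun b ⟨hb, hbx⟩ => ?_⟩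
  exact hu b ⟨(Finset.mem_union.1 hb).resolve_right fun hb₂ => h₂ b hb₂ hbx, hbx⟩

theorem headStr_ne_tailStr {L' : Finset (Fin n)} {S' : Finset (GArrow n)}
    (hS : IsTreeDiagram L i S) (hS' : IsTreeDiagram L' i S') (hL : Disjoint L L') (hi : i ∉ L')
    {a b : GArrow n} (ha : a ∈ S) (hb : b ∈ S') : a.headStr ≠ b.tailStr := by
  intro hab
  rcases hS.2.2.2.1 a ha with hmem | hai
  · exact Finset.disjoint_left.1 hL hmem (hab ▸ hS'.tailStr_mem hb)
  · exact hi (hai ▸ hab ▸ hS'.tailStr_mem hb)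

theorem union {L₁ L₂ : Finset (Fin n)} {S₁ S₂ : Finset (GArrow n)}
    (h₁ : IsTreeDiagram L₁ i S₁) (h₂ : IsTreeDiagram L₂ i S₂) (hL : Disjoint L₁ L₂)
    (hi₁ : i ∉ L₁) (hi₂ : i ∉ L₂) : IsTreeDiagram (L₁ ∪ L₂) i (S₁ ∪ S₂) := by
  refine ⟨?_, fun x hx => ?_, ?_, ?_, ?_⟩
  · intro a ha
    rcases Finset.mem_union.1 ha with ha | ha
    exacts [h₁.1 a ha, h₂.1 a ha]
  · rcases Finset.mem_union.1 hx with hx | hx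
    · exact existsUnique_tailStr_union (h₁.2.1 x hx)
        fun b hb hbx => Finset.disjoint_left.1 hL hx (hbx ▸ h₂.tailStr_mem hb)
    · rw [Finset.union_comm]
      exact existsUnique_tailStr_union (h₂.2.1 x hx)
        fun b hb hbx => Finset.disjoint_right.1 hL hx (hbx ▸ h₁.tailStr_mem hb)
  · intro a ha
    rcases Finset.mem_union.1 ha with ha | ha
    exacts [Finset.mem_union_left _ (h₁.tailStr_mem ha),
      Finset.mem_union_right _ (h₂.tailStr_mem ha)]
  · intro a ha
    rcases Finset.mem_union.1 ha with ha | ha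
    · exact (h₁.2.2.2.1 a ha).imp_left (Finset.mem_union_left _)
    · exact (h₂.2.2.2.1 a ha).imp_left (Finset.mem_union_right _)
  · intro a ha b hb hab
    rcases Finset.mem_union.1 ha with ha | ha <;> rcases Finset.mem_union.1 hb with hb | hb
    · exact h₁.2.2.2.2 a ha b hb hab
    · exact absurd hab (h₁.headStr_ne_tailStr h₂ hL hi₂ ha hb)
    · exact absurd hab (h₂.headStr_ne_tailStr h₁ hL.symm hi₁ ha hb)
    · exact h₂.2.2.2.2 a ha b hb hab

end IsTreeDiagram

namespace IsPlanarTreeDiagram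

variable {L : Finset (Fin n)} {i : Fin n} {S : Finset (GArrow n)}

theorem tailStr_lt_iff (hS : IsPlanarTreeDiagram L i S) {a : GArrow n} (ha : a ∈ S)
    (hai : a.headStr ≠ i) : a.tailStr < i ↔ a.headStr < i := by
  obtain ⟨hT, hroot, hside, -⟩ := hS
  obtain ⟨m, him, c, hc, hct, rfl⟩ :=
    Relation.TransGen.tail'_iff.1 (hroot _ (hT.tailStr_mem ha))
  obtain rfl : c = a := hT.eq_of_tailStr_eq hc ha hct
  rcases Relation.ReflTransGen.cases_head him with h | ⟨t, ⟨b, hb, rfl, hbi⟩, hd⟩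
  · exact absurd h.symm hai
  rw [← hbi, ← hside b hb _ hd, ← hside b hb _ (hd.tail ⟨c, hc, rfl, rfl⟩)]

theorem lt_tailStr_iff (hS : IsPlanarTreeDiagram L i S) (hiL : i ∉ L) {a : GArrow n}
    (ha : a ∈ S) (hai : a.headStr ≠ i) : i < a.tailStr ↔ i < a.headStr := by
  rw [← (hS.1.tailStr_ne hiL ha).symm.le_iff_lt, ← hai.symm.le_iff_lt, ← not_lt, ← not_lt,
    hS.tailStr_lt_iff ha hai]

theorem filter (hS : IsPlanarTreeDiagram L i S) (hiL : i ∉ L) {p : Fin n → Prop}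
    [DecidablePred p] (hp : ∀ a ∈ S, a.headStr ≠ i → p a.tailStr → p a.headStr) :
    IsPlanarTreeDiagram (L.filter p) i (S.filter fun a => p a.tailStr) := by
  obtain ⟨hT, hroot, hside, horder⟩ := hS
  have hsub : S.filter (fun a => p a.tailStr) ⊆ S := Finset.filter_subset _ _
  refine ⟨hT.filter hp, fun x hx => ?_, fun a ha k hk => hside a (hsub ha) k (hk.mono hsub),
    fun a ha b hb hab hpos k k' hk hk' =>
      horder a (hsub ha) b (hsub hb) hab hpos k k' (hk.mono hsub) (hk'.mono hsub)⟩
  rw [Finset.mem_filter] at hx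
  exact transGen_parentRel_filter (fun _ => hT.tailStr_ne hiL) hp
    (hroot x hx.1) hx.2

theorem filter_tailStr_lt (hS : IsPlanarTreeDiagram L i S) (hiL : i ∉ L) :
    IsPlanarTreeDiagram (L.filter (· < i)) i (S.filter fun a => a.tailStr < i) :=
  hS.filter hiL fun _ ha hai => (hS.tailStr_lt_iff ha hai).1

theorem filter_lt_tailStr (hS : IsPlanarTreeDiagram L i S) (hiL : i ∉ L) :
    IsPlanarTreeDiagram (L.filter (i < ·)) i (S.filter fun a => i < a.tailStr) :=
  hS.filter hiL fun _ ha hai => (hS.lt_tailStr_iff hiL ha hai).1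

theorem union {L₁ L₂ : Finset (Fin n)} {S₁ S₂ : Finset (GArrow n)}
    (h₁ : IsPlanarTreeDiagram L₁ i S₁) (h₂ : IsPlanarTreeDiagram L₂ i S₂)
    (hL₁ : ∀ x ∈ L₁, x < i) (hL₂ : ∀ x ∈ L₂, i < x) :
    IsPlanarTreeDiagram (L₁ ∪ L₂) i (S₁ ∪ S₂) := by
  obtain ⟨hT₁, hroot₁, hside₁, horder₁⟩ := h₁
  obtain ⟨hT₂, hroot₂, hside₂, horder₂⟩ := h₂
  have htail₁ : ∀ a ∈ S₁, a.tailStr < i := fun a ha => hL₁ _ (hT₁.tailStr_mem ha)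
  have htail₂ : ∀ a ∈ S₂, i < a.tailStr := fun a ha => hL₂ _ (hT₂.tailStr_mem ha)
  have hhead₁ : ∀ a ∈ S₁, a.headStr ≤ i := fun a ha =>
    (hT₁.2.2.2.1 a ha).elim (fun h => (hL₁ _ h).le) (fun h => h.le)
  have hhead₂ : ∀ a ∈ S₂, i ≤ a.headStr := fun a ha =>
    (hT₂.2.2.2.1 a ha).elim (fun h => (hL₂ _ h).le) (fun h => h.ge)
  have hd₁ : ∀ a ∈ S₁, ∀ k, Descends (S₁ ∪ S₂) a.tailStr k → Descends S₁ a.tailStr k :=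
    fun a ha k hk => descends_union_left (p := (· < i)) htail₁
      (fun b hb => (hhead₂ b hb).not_gt) hk (htail₁ a ha)
  have hd₂ : ∀ a ∈ S₂, ∀ k, Descends (S₁ ∪ S₂) a.tailStr k → Descends S₂ a.tailStr k :=
    fun a ha k hk => descends_union_left (p := (i < ·)) htail₂
      (fun b hb => (hhead₁ b hb).not_gt) (Finset.union_comm S₁ S₂ ▸ hk) (htail₂ a ha)
  have hL : Disjoint L₁ L₂ :=
    Finset.disjoint_left.2 fun x hx₁ hx₂ => (hL₁ x hx₁).asymm (hL₂ x hx₂)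
  refine ⟨hT₁.union hT₂ hL (fun h => lt_irrefl i (hL₁ i h)) (fun h => lt_irrefl i (hL₂ i h)),
    ?_, ?_, ?_⟩
  · intro x hx
    rcases Finset.mem_union.1 hx with hx | hx
    · exact Relation.TransGen.mono (fun _ _ => ParentRel.mono Finset.subset_union_left) _ _
        (hroot₁ x hx)
    · exact Relation.TransGen.mono (fun _ _ => ParentRel.mono Finset.subset_union_right) _ _
        (hroot₂ x hx)
  · intro a ha k hk
    rcases Finset.mem_union.1 ha with ha | ha
    exacts [hside₁ a ha k (hd₁ a ha k hk), hside₂ a ha k (hd₂ a ha k hk)]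
  · intro a ha b hb hab hpos k k' hk hk'
    rcases Finset.mem_union.1 ha with ha | ha <;> rcases Finset.mem_union.1 hb with hb | hb
    · exact horder₁ a ha b hb hab hpos k k' (hd₁ a ha k hk) (hd₁ b hb k' hk')
    · have hbi : b.headStr = i := le_antisymm (hab ▸ hhead₁ a ha) (hhead₂ b hb)
      have hai : a.headStr = i := hab.trans hbi
      exact ⟨fun _ hb' => ((htail₂ b hb).asymm (hbi ▸ hb')).elim,
        fun ha' _ => ((htail₁ a ha).asymm (hai ▸ ha')).elim⟩
    · have hbi : b.headStr = i := le_antisymm (hhead₁ b hb) (hab ▸ hhead₂ a ha)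
      have hai : a.headStr = i := hab.trans hbi
      exact ⟨fun ha' _ => ((htail₂ a ha).asymm (hai ▸ ha')).elim,
        fun _ hb' => ((htail₁ b hb).asymm (hbi ▸ hb')).elim⟩
    · exact horder₂ a ha b hb hab hpos k k' (hd₂ a ha k hk) (hd₂ b hb k' hk')

end IsPlanarTreeDiagram

theorem treeSign_mul_prod_union {S₁ S₂ : Finset (GArrow n)} (h : Disjoint S₁ S₂) :
    treeSign (S₁ ∪ S₂) * ∏ a ∈ S₁ ∪ S₂, a.sign =
      (treeSign S₁ * ∏ a ∈ S₁, a.sign) * (treeSign S₂ * ∏ a ∈ S₂, a.sign) := by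
  rw [treeSign, treeSign, treeSign, Finset.filter_union,
    Finset.card_union_of_disjoint (Finset.disjoint_filter_filter h), pow_add,
    Finset.prod_union h]
  ring

theorem Z_eq_sum_filter (L : Finset (Fin n)) (j : Fin n) (G : GaussDiagram n) :
    Z L j G = ∑ S ∈ G.arrows.powerset.filter (IsPlanarTreeDiagram L j),
      treeSign S * ∏ a ∈ S, a.sign :=
  (Finset.sum_filter _ _).symm

theorem Z_eq_mul_of_notMem {L : Finset (Fin n)} {i : Fin n} (hiL : i ∉ L)
    (G : GaussDiagram n) :
    Z L i G = Z (L.filter (· < i)) i G * Z (L.filter (i < ·)) i G := by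
  simp only [Z_eq_sum_filter, Finset.sum_mul_sum, ← Finset.sum_product']
  refine Finset.sum_nbij' (fun S => (S.filter (·.tailStr < i), S.filter (i < ·.tailStr)))
    (fun P => P.1 ∪ P.2) ?_ ?_ ?_ ?_ ?_ <;>
    simp only [Finset.mem_filter, Finset.mem_powerset, Finset.mem_product, Prod.forall]
  · rintro S ⟨hSG, hS⟩
    exact ⟨⟨(Finset.filter_subset _ _).trans hSG, hS.filter_tailStr_lt hiL⟩,
      (Finset.filter_subset _ _).trans hSG, hS.filter_lt_tailStr hiL⟩
  · rintro S₁ S₂ ⟨⟨hS₁G, hS₁⟩, hS₂G, hS₂⟩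
    refine ⟨Finset.union_subset hS₁G hS₂G, ?_⟩
    rw [← Finset.filter_lt_union_filter_gt (f := id) fun x hx (hxi : x = i) => hiL (hxi ▸ hx)]
    exact hS₁.union hS₂ (fun x hx => (Finset.mem_filter.1 hx).2)
      (fun x hx => (Finset.mem_filter.1 hx).2)
  · rintro S ⟨-, hS⟩
    exact Finset.filter_lt_union_filter_gt fun a ha => hS.1.tailStr_ne hiL ha
  · rintro S₁ S₂ ⟨⟨-, hS₁⟩, -, hS₂⟩
    have htail₁ : ∀ a ∈ S₁, a.tailStr < i :=
      fun a ha => (Finset.mem_filter.1 (hS₁.1.tailStr_mem ha)).2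
    have htail₂ : ∀ a ∈ S₂, i < a.tailStr :=
      fun a ha => (Finset.mem_filter.1 (hS₂.1.tailStr_mem ha)).2
    refine Prod.ext (Finset.filter_union_of_forall htail₁ fun a ha => (htail₂ a ha).not_gt) ?_
    rw [Finset.union_comm]
    exact Finset.filter_union_of_forall htail₂ fun a ha => (htail₁ a ha).not_gt
  · rintro S ⟨-, hS⟩
    conv_lhs => rw [← Finset.filter_lt_union_filter_gt fun a ha => hS.1.tailStr_ne hiL ha]
    exact treeSign_mul_prod_union (Finset.disjoint_filter.2 fun _ _ h => h.asymm)

end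

theorem factorization_interior_trunk_general {n : ℕ} (G : GaussDiagram n)
    (I : Finset (Fin n)) (i : Fin n) :
    Z (I.erase i) i G = Z (I.filter (· < i)) i G * Z (I.filter (i < ·)) i G := by
  rw [Z_eq_mul_of_notMem (I.notMem_erase i), Finset.filter_erase, Finset.filter_erase,
    Finset.erase_eq_of_notMem, Finset.erase_eq_of_notMem] <;> simp

/-- **Factorization at an interior trunk.**  Let `I = {i₁ < … < i_r}` and let
`i = i_k ∈ I` with `1 < k < r` (that is, `I` contains elements both below and
above `i`).  Then `Z_{I∖{i}, i}(G) = Z_{I⁻, i}(G) · Z_{I⁺, i}(G)` where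
`I⁻ = {x ∈ I : x < i}` and `I⁺ = {x ∈ I : x > i}`. -/
theorem factorization_interior_trunk {n : ℕ} (G : GaussDiagram n)
    (I : Finset (Fin n)) (i : Fin n) (hi : i ∈ I)
    (hlow : ∃ a ∈ I, a < i) (hhigh : ∃ b ∈ I, i < b) :
    Z (I.erase i) i G = Z (I.filter (· < i)) i G * Z (I.filter (i < ·)) i G :=
  factorization_interior_trunk_general G I i
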